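/- In ℤ^3 with the order θ_1 obtained from the natural order by swapping -1 and -2 (so ⋯ ≺ -3 ≺ -1 ≺ -2 ≺ 0 ≺ 1 ≺ ⋯), the total order construction centered at p = (0,0,2) is not a consistent digital ray system: with q = (1,1,3) and q' = (1,1,1), the constructed paths are R(p,q) = (0,0,2),(1,0,2),(1,1,2),(1,1,3) and R(p,q') = (0,0,2),(0,1,2),(1,1,2),(1,1,1), and their intersection {(0,0,2),(1,1,2)} is not connected under the 6-neighbor topology, violating the subsegment property. -/
import Mathlib


open scoped Classical

/-- The function swapping `-1` and `-2` and fixing every other integer. -/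
def swapNeg (x : ℤ) : ℤ := if x = -1 then -2 else if x = -2 then -1 else x

/-- The order `θ₁` obtained from the natural order on `ℤ` by swapping `-1` and `-2`:
`⋯ ≺ -3 ≺ -1 ≺ -2 ≺ 0 ≺ 1 ≺ ⋯`. -/
def theta1 (a b : ℤ) : Prop := swapNeg a < swapNeg b

/-- The axis-order of a slope `t ∈ {±1}³`: coordinates with positive sign in
increasing index order, followed by coordinates with negative sign in decreasing
index order. -/
def axisOrder (t : Fin 3 → ℤ) : List (Fin 3) :=
  (List.finRange 3).filter (fun i => t i = 1) ++
    ((List.finRange 3).filter (fun i => t i = -1)).reverse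

/-- Pick the first coordinate `j` in the axis-order list whose cumulative
threshold `acc + |q j - p j|` exceeds the given rank. -/
def pickAux (p q : Fin 3 → ℤ) (rank : ℕ) : List (Fin 3) → ℕ → Option (Fin 3)
  | [], _ => none
  | j :: rest, acc =>
    if rank < acc + (q j - p j).natAbs then some j
    else pickAux p q rank rest (acc + (q j - p j).natAbs)

/-- One step of the total order construction in `ℤ³` for the orthant of slope `t`:
at the point `m`, move one unit (in the direction `t j`) in the coordinate `j`
determined by the rank of `t · m` in the restriction of `r` to `[t·p, t·q - 1]`
and the axis-order of `t`. -/
noncomputable def step3 (r : ℤ → ℤ → Prop) (t p q m : Fin 3 → ℤ) : Fin 3 → ℤ :=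
  let rank := ((Finset.Icc (∑ i, t i * p i) ((∑ i, t i * q i) - 1)).filter
    (fun y => r y (∑ i, t i * m i))).card
  match pickAux p q rank (axisOrder t) 0 with
  | some j => Function.update m j (m j + t j)
  | none => m

/-- The point visited after `j` steps of the total order construction path
from `p` towards `q` with slope `t`, generated by the order `r`. -/
noncomputable def path3 (r : ℤ → ℤ → Prop) (t p q : Fin 3 → ℤ) : ℕ → Fin 3 → ℤ
  | 0 => p
  | j + 1 => step3 r t p q (path3 r t p q j)


instance : ∀ a b, Decidable (theta1 a b) := fun _ _ =>
  inferInstanceAs (Decidable (_ < _))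

lemma step_a : step3 theta1 ![1,1,1] ![0,0,2] ![1,1,3] ![0,0,2] = ![1,0,2] := by
  unfold step3; rw [Finset.filter_congr_decidable]; decide

lemma step_b : step3 theta1 ![1,1,1] ![0,0,2] ![1,1,3] ![1,0,2] = ![1,1,2] := by
  unfold step3; rw [Finset.filter_congr_decidable]; decide

lemma step_c : step3 theta1 ![1,1,1] ![0,0,2] ![1,1,3] ![1,1,2] = ![1,1,3] := by
  unfold step3; rw [Finset.filter_congr_decidable]; decide

lemma step_d : step3 theta1 ![1,1,-1] ![0,0,2] ![1,1,1] ![0,0,2] = ![0,1,2] := by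
  unfold step3; rw [Finset.filter_congr_decidable]; decide

lemma step_e : step3 theta1 ![1,1,-1] ![0,0,2] ![1,1,1] ![0,1,2] = ![1,1,2] := by
  unfold step3; rw [Finset.filter_congr_decidable]; decide

lemma step_f : step3 theta1 ![1,1,-1] ![0,0,2] ![1,1,1] ![1,1,2] = ![1,1,1] := by
  unfold step3; rw [Finset.filter_congr_decidable]; decide

theorem stmt_19 :
    let p : Fin 3 → ℤ := ![0, 0, 2]
    let q : Fin 3 → ℤ := ![1, 1, 3]
    let q' : Fin 3 → ℤ := ![1, 1, 1]
    let t : Fin 3 → ℤ := ![1, 1, 1]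
    let t' : Fin 3 → ℤ := ![1, 1, -1]
    let R1 : Set (Fin 3 → ℤ) := {x | ∃ j ≤ 3, path3 theta1 t p q j = x}
    let R2 : Set (Fin 3 → ℤ) := {x | ∃ j ≤ 3, path3 theta1 t' p q' j = x}
    -- the two constructed paths
    (path3 theta1 t p q 0 = ![0, 0, 2] ∧ path3 theta1 t p q 1 = ![1, 0, 2] ∧
     path3 theta1 t p q 2 = ![1, 1, 2] ∧ path3 theta1 t p q 3 = ![1, 1, 3]) ∧
    (path3 theta1 t' p q' 0 = ![0, 0, 2] ∧ path3 theta1 t' p q' 1 = ![0, 1, 2] ∧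
     path3 theta1 t' p q' 2 = ![1, 1, 2] ∧ path3 theta1 t' p q' 3 = ![1, 1, 1]) ∧
    -- their intersection …
    R1 ∩ R2 = {![0, 0, 2], ![1, 1, 2]} ∧
    -- … is not connected under the 6-neighbor topology
    ¬ Relation.ReflTransGen
        (fun x y => x ∈ R1 ∩ R2 ∧ y ∈ R1 ∩ R2 ∧ (∑ i, (x i - y i).natAbs) = 1)
        ![0, 0, 2] ![1, 1, 2] := by

  intro p q q' t t' R1 R2
  have h10 : path3 theta1 t p q 0 = ![0,0,2] := rfl
  have h11 : path3 theta1 t p q 1 = ![1,0,2] := by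
    show step3 theta1 t p q (path3 theta1 t p q 0) = _
    rw [h10]; exact step_a
  have h12 : path3 theta1 t p q 2 = ![1,1,2] := by
    show step3 theta1 t p q (path3 theta1 t p q 1) = _
    rw [h11]; exact step_b
  have h13 : path3 theta1 t p q 3 = ![1,1,3] := by
    show step3 theta1 t p q (path3 theta1 t p q 2) = _
    rw [h12]; exact step_c
  have h20 : path3 theta1 t' p q' 0 = ![0,0,2] := rfl
  have h21 : path3 theta1 t' p q' 1 = ![0,1,2] := by
    show step3 theta1 t' p q' (path3 theta1 t' p q' 0) = _
    rw [h20]; exact step_d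
  have h22 : path3 theta1 t' p q' 2 = ![1,1,2] := by
    show step3 theta1 t' p q' (path3 theta1 t' p q' 1) = _
    rw [h21]; exact step_e
  have h23 : path3 theta1 t' p q' 3 = ![1,1,1] := by
    show step3 theta1 t' p q' (path3 theta1 t' p q' 2) = _
    rw [h22]; exact step_f
  have hR1 : R1 = {![0,0,2], ![1,0,2], ![1,1,2], ![1,1,3]} := by
    ext x
    simp only [R1, Set.mem_setOf_eq, Set.mem_insert_iff, Set.mem_singleton_iff]
    constructor
    · rintro ⟨j, hj, rfl⟩
      interval_cases j
      · exact Or.inl h10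
      · exact Or.inr (Or.inl h11)
      · exact Or.inr (Or.inr (Or.inl h12))
      · exact Or.inr (Or.inr (Or.inr h13))
    · rintro (rfl | rfl | rfl | rfl)
      exacts [⟨0, by norm_num, h10⟩, ⟨1, by norm_num, h11⟩,
        ⟨2, by norm_num, h12⟩, ⟨3, le_refl 3, h13⟩]
  have hR2 : R2 = {![0,0,2], ![0,1,2], ![1,1,2], ![1,1,1]} := by
    ext x
    simp only [R2, Set.mem_setOf_eq, Set.mem_insert_iff, Set.mem_singleton_iff]
    constructor
    · rintro ⟨j, hj, rfl⟩
      interval_cases j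
      · exact Or.inl h20
      · exact Or.inr (Or.inl h21)
      · exact Or.inr (Or.inr (Or.inl h22))
      · exact Or.inr (Or.inr (Or.inr h23))
    · rintro (rfl | rfl | rfl | rfl)
      exacts [⟨0, by norm_num, h20⟩, ⟨1, by norm_num, h21⟩,
        ⟨2, by norm_num, h22⟩, ⟨3, le_refl 3, h23⟩]
  have hint : R1 ∩ R2 = {![0,0,2], ![1,1,2]} := by
    rw [hR1, hR2]
    ext x
    simp only [Set.mem_inter_iff, Set.mem_insert_iff, Set.mem_singleton_iff]
    constructor
    · rintro ⟨rfl | rfl | rfl | rfl, h⟩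
      · exact Or.inl rfl
      · exact absurd h (by decide)
      · exact Or.inr rfl
      · exact absurd h (by decide)
    · rintro (rfl | rfl)
      · exact ⟨Or.inl rfl, Or.inl rfl⟩
      · exact ⟨Or.inr (Or.inr (Or.inl rfl)), Or.inr (Or.inr (Or.inl rfl))⟩
  refine ⟨⟨h10, h11, h12, h13⟩, ⟨h20, h21, h22, h23⟩, hint, ?_⟩
  intro h
  rcases h.cases_head with heq | ⟨c, ⟨_, hc2, hd⟩, _⟩
  · exact absurd heq (by decide)
  · rw [hint] at hc2
    rcases hc2 with rfl | rfl
    · exact absurd hd (by decide)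
    · exact absurd hd (by decide)
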